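/- arXiv:2201.09969 — 5 statements merged into one kernel-verified Lean document; each statement's English description precedes it below -/
import Mathlib

section
/- Let T be the monad of an equational theory over a finite signature admitting a Mal'cev term. If L ⊆ TΣ is recognized by a finite T-algebra and g : Σ → Γ is a surjective function between finite alphabets, then the direct image of L under Tg : TΣ → TΓ is recognized by a finite T-algebra. -/
/-- Terms over a signature `I` with arities `ar`, with variables from `V`. -/
inductive Term (I : Type) (ar : I → ℕ) (V : Type) : Type where
  | var : V → Term I ar V
  | op : (i : I) → (Fin (ar i) → Term I ar V) → Term I ar V

/-- Evaluation of a term in an algebra with operations `ops` under valuation `ρ`. -/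
def Term.eval {I : Type} {ar : I → ℕ} {V A : Type}
    (ops : ∀ i : I, (Fin (ar i) → A) → A) (ρ : V → A) : Term I ar V → A
  | .var v => ρ v
  | .op i ts => ops i fun j => (ts j).eval ops ρ

/-- Substitution of terms for variables. -/
def Term.subst {I : Type} {ar : I → ℕ} {V W : Type}
    (σ : V → Term I ar W) : Term I ar V → Term I ar W
  | .var v => σ v
  | .op i ts => .op i fun j => (ts j).subst σ

/-- Renaming of variables (letter-to-letter map on terms). -/
def Term.rename {I : Type} {ar : I → ℕ} {V W : Type}
    (g : V → W) : Term I ar V → Term I ar W :=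
  Term.subst fun v => .var (g v)

/-- Equational consequence: the smallest congruence on terms over `V` containing all
substitution instances of the equations `E`. -/
inductive Eqv {I : Type} {ar : I → ℕ} (E : Set (Term I ar ℕ × Term I ar ℕ)) {V : Type} :
    Term I ar V → Term I ar V → Prop where
  | refl (t : Term I ar V) : Eqv E t t
  | symm {s t : Term I ar V} : Eqv E s t → Eqv E t s
  | trans {s t u : Term I ar V} : Eqv E s t → Eqv E t u → Eqv E s u
  | op (i : I) {ss ts : Fin (ar i) → Term I ar V} :
      (∀ j, Eqv E (ss j) (ts j)) → Eqv E (.op i ss) (.op i ts)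
  | ax {l r : Term I ar ℕ} : (l, r) ∈ E → ∀ σ : ℕ → Term I ar V,
      Eqv E (l.subst σ) (r.subst σ)

namespace MalcevAux

variable {I : Type} {ar : I → ℕ}

theorem subst_subst {V W U : Type} (σ : V → Term I ar W) (τ : W → Term I ar U) :
    ∀ t : Term I ar V, (t.subst σ).subst τ = t.subst fun v => (σ v).subst τ
  | .var v => rfl
  | .op i ts => by
      simp only [Term.subst]
      exact congrArg _ (funext fun j => subst_subst σ τ (ts j))

theorem eval_subst {V W A : Type} (ops : ∀ i : I, (Fin (ar i) → A) → A) (ρ : W → A)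
    (σ : V → Term I ar W) :
    ∀ t : Term I ar V, (t.subst σ).eval ops ρ = t.eval ops fun v => (σ v).eval ops ρ
  | .var v => rfl
  | .op i ts => by
      simp only [Term.subst, Term.eval]
      exact congrArg _ (funext fun j => eval_subst ops ρ σ (ts j))

theorem rename_rename {V W U : Type} (f : V → W) (g : W → U) (t : Term I ar V) :
    (t.rename f).rename g = t.rename fun v => g (f v) :=
  subst_subst _ _ t

theorem subst_var {V : Type} : ∀ t : Term I ar V, t.subst (fun v => Term.var v) = t
  | .var v => rfl
  | .op i ts => by
      simp only [Term.subst]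
      exact congrArg _ (funext fun j => subst_var (ts j))

theorem Eqv_subst {E : Set (Term I ar ℕ × Term I ar ℕ)} {V W : Type} {s t : Term I ar V}
    (σ : V → Term I ar W) (h : Eqv E s t) : Eqv E (s.subst σ) (t.subst σ) := by
  induction h with
  | refl t => exact .refl _
  | symm _ ih => exact ih.symm
  | trans _ _ ih1 ih2 => exact ih1.trans ih2
  | op i _ ih => simp only [Term.subst]; exact .op i ih
  | ax hmem σ0 => rw [subst_subst, subst_subst]; exact .ax hmem _

theorem Eqv_subst_congr {E : Set (Term I ar ℕ × Term I ar ℕ)} {V W : Type}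
    (σ τ : V → Term I ar W) (h : ∀ v, Eqv E (σ v) (τ v)) :
    ∀ t : Term I ar V, Eqv E (t.subst σ) (t.subst τ)
  | .var v => h v
  | .op i ts => by
      simp only [Term.subst]
      exact .op i fun j => Eqv_subst_congr σ τ h (ts j)

theorem eval_of_eqv {E : Set (Term I ar ℕ × Term I ar ℕ)} {V A : Type}
    (ops : ∀ i : I, (Fin (ar i) → A) → A)
    (hA : ∀ lr ∈ E, ∀ ρ : ℕ → A, Term.eval ops ρ lr.1 = Term.eval ops ρ lr.2)
    (ρ : V → A) {s t : Term I ar V} (h : Eqv E s t) : s.eval ops ρ = t.eval ops ρ := by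
  induction h with
  | refl => rfl
  | symm _ ih => exact ih.symm
  | trans _ _ ih1 ih2 => exact ih1.trans ih2
  | op i _ ih => simp only [Term.eval]; exact congrArg _ (funext ih)
  | ax hmem σ => rw [eval_subst, eval_subst]; exact hA _ hmem _

theorem hom_eval {X A : Type} (ops : ∀ i : I, (Fin (ar i) → A) → A) (h : Term I ar X → A)
    (hh : ∀ i ts, h (Term.op i ts) = ops i fun j => h (ts j)) :
    ∀ t, h t = t.eval ops fun x => h (.var x)
  | .var v => rfl
  | .op i ts => by
      rw [hh]; simp only [Term.eval]
      exact congrArg _ (funext fun j => hom_eval ops h hh (ts j))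

end MalcevAux

/-- for the free-algebra monad of an equational theory over a finite
signature admitting a Mal'cev term, recognizable languages are closed under direct
images of surjective letter-to-letter homomorphisms. -/
theorem malcev_direct_image_recognizable {I : Type} [Finite I] {ar : I → ℕ}
    (E : Set (Term I ar ℕ × Term I ar ℕ))
    (p : Term I ar (Fin 3))
    (hp1 : Eqv E (p.subst ![Term.var 0, Term.var 0, Term.var 1]) (Term.var (1 : Fin 2)))
    (hp2 : Eqv E (p.subst ![Term.var 1, Term.var 0, Term.var 0]) (Term.var (1 : Fin 2)))
    {X Y : Type} [Finite X] [Finite Y]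
    (g : X → Y) (hg : Function.Surjective g)
    (L : Set (Term I ar X))
    (hL : ∃ (A : Type) (_ : Finite A) (ops : ∀ i : I, (Fin (ar i) → A) → A),
      (∀ lr ∈ E, ∀ ρ : ℕ → A, Term.eval ops ρ lr.1 = Term.eval ops ρ lr.2) ∧
      ∃ (h : Term I ar X → A) (S : Set A),
        (∀ i ts, h (Term.op i ts) = ops i fun j => h (ts j)) ∧ L = h ⁻¹' S) :
    ∃ (B : Type) (_ : Finite B) (opsB : ∀ i : I, (Fin (ar i) → B) → B),
      (∀ lr ∈ E, ∀ ρ : ℕ → B, Term.eval opsB ρ lr.1 = Term.eval opsB ρ lr.2) ∧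
      ∃ (k : Term I ar Y → B) (S' : Set B),
        (∀ i ts, k (Term.op i ts) = opsB i fun j => k (ts j)) ∧
        {u : Term I ar Y | ∃ t ∈ L, Eqv E u (t.rename g)} = k ⁻¹' S' := by
  classical
  open MalcevAux in
  obtain ⟨A, hAfin, ops, hA, h, S, hhom, hLS⟩ := hL
  haveI : Finite A := hAfin
  obtain ⟨s, hs⟩ := hg.hasRightInverse
  set α : X → A := fun x => h (Term.var x) with hα
  have he : ∀ t, h t = t.eval ops α := MalcevAux.hom_eval ops h hhom
  set e : Term I ar X → A := fun t => t.eval ops α with hedef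
  -- Mal'cev law in A : eval ops ![b, a, a] p = b
  have malA2 : ∀ a b : A, Term.eval ops ![b, a, a] p = b := by
    intro a b
    have h0 := MalcevAux.eval_of_eqv ops hA (![a, b] : Fin 2 → A) hp2
    rw [MalcevAux.eval_subst] at h0
    have h2 : (fun v => Term.eval ops ![a, b] (![Term.var 1, Term.var 0, Term.var 0] v))
        = ![b, a, a] := by
      funext v; fin_cases v <;> rfl
    rw [h2] at h0
    exact h0
  -- Mal'cev law at the term level : p(w,w,v) ~ v
  have malT1 : ∀ {V : Type} (w v : Term I ar V), Eqv E (p.subst ![w, w, v]) v := by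
    intro V w v
    have h0 := MalcevAux.Eqv_subst (E := E) (![w, v] : Fin 2 → Term I ar V) hp1
    rw [MalcevAux.subst_subst] at h0
    have h2 : (fun u => Term.subst ![w, v] (![Term.var 0, Term.var 0, Term.var 1] u))
        = ![w, w, v] := by
      funext u; fin_cases u <;> rfl
    rw [h2] at h0
    exact h0
  -- the subalgebra generated by the image of the variables
  set Asub : Type := {a : A // ∃ t : Term I ar X, e t = a} with hAsub
  set Rel : Asub → Asub → Prop := fun a b =>
    ∃ t1 t2 : Term I ar X, Eqv E (t1.rename g) (t2.rename g) ∧ e t1 = a.1 ∧ e t2 = b.1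
    with hRel
  -- helper : e of a p-substitution
  have evp : ∀ t1 t2 t3 : Term I ar X, e (p.subst ![t1, t2, t3])
      = Term.eval ops ![e t1, e t2, e t3] p := by
    intro t1 t2 t3
    show (p.subst ![t1, t2, t3]).eval ops α = _
    rw [MalcevAux.eval_subst]
    congr 1
    funext v; fin_cases v <;> rfl
  have rnp : ∀ t1 t2 t3 : Term I ar X, (p.subst ![t1, t2, t3]).rename g
      = p.subst ![t1.rename g, t2.rename g, t3.rename g] := by
    intro t1 t2 t3
    show (p.subst ![t1, t2, t3]).subst _ = _
    rw [MalcevAux.subst_subst]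
    congr 1
    funext v; fin_cases v <;> rfl
  have hrefl : ∀ a : Asub, Rel a a := fun ⟨a, t, ht⟩ => ⟨t, t, .refl _, ht, ht⟩
  have hsymm : ∀ a b : Asub, Rel a b → Rel b a := by
    rintro a b ⟨t1, t2, hEq, h1, h2⟩
    refine ⟨t2, p.subst ![t1, t2, t2], ?_, h2, ?_⟩
    · rw [rnp]
      refine Eqv.symm (Eqv.trans (MalcevAux.Eqv_subst_congr _
        ![t2.rename g, t2.rename g, t2.rename g] ?_ p) (malT1 _ _))
      intro v; fin_cases v
      exacts [hEq, .refl _, .refl _]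
    · rw [evp, malA2, h1]
  have htrans : ∀ a b c : Asub, Rel a b → Rel b c → Rel a c := by
    rintro a b c ⟨t1, t2, h12, e1, e2⟩ ⟨t3, t4, h34, e3, e4⟩
    refine ⟨p.subst ![t1, t2, t3], t4, ?_, ?_, e4⟩
    · rw [rnp]
      refine Eqv.trans (Eqv.trans (MalcevAux.Eqv_subst_congr _
        ![t2.rename g, t2.rename g, t3.rename g] ?_ p) (malT1 _ _)) h34
      intro v; fin_cases v
      exacts [h12, .refl _, .refl _]
    · rw [evp]
      have : e t3 = e t2 := e3.trans e2.symm
      rw [this, malA2, e1]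
  letI st : Setoid Asub := ⟨Rel, ⟨hrefl, fun {a b} hab => hsymm a b hab,
    fun {a b c} hab hbc => htrans a b c hab hbc⟩⟩
  have memop : ∀ (i : I) (f : Fin (ar i) → Asub), ∃ t, e t = ops i fun j => (f j).1 := by
    intro i f
    choose ts hts using fun j => (f j).2
    exact ⟨.op i ts, congrArg _ (funext hts)⟩
  set opA : ∀ i : I, (Fin (ar i) → Asub) → Asub :=
    fun i f => ⟨ops i fun j => (f j).1, memop i f⟩ with hopA
  have opwd : ∀ (i : I) (f1 f2 : Fin (ar i) → Asub), (∀ j, Rel (f1 j) (f2 j)) →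
      Rel (opA i f1) (opA i f2) := by
    intro i f1 f2 hf
    choose t1 t2 hEq h1 h2 using hf
    refine ⟨.op i t1, .op i t2, ?_, ?_, ?_⟩
    · show Eqv E (.op i fun j => (t1 j).rename g) (.op i fun j => (t2 j).rename g)
      exact .op i hEq
    · exact congrArg _ (funext h1)
    · exact congrArg _ (funext h2)
  set B := Quotient st with hB
  haveI : Finite Asub := Subtype.finite
  haveI hBfin : Finite B := Quotient.finite st
  set opB : ∀ i : I, (Fin (ar i) → B) → B :=
    fun i f => ⟦opA i fun j => (f j).out⟧ with hopB
  have hmkop : ∀ (i : I) (f : Fin (ar i) → Asub),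
      opB i (fun j => ⟦f j⟧) = ⟦opA i f⟧ := by
    intro i f
    exact Quotient.sound (opwd i _ _ fun j => Quotient.mk_out (f j))
  have memeval : ∀ (σ : ℕ → Asub) (t : Term I ar ℕ),
      ∃ t' : Term I ar X, e t' = t.eval ops (fun n => (σ n).1) := by
    intro σ t
    induction t with
    | var n => exact (σ n).2
    | op i ts ih =>
      choose t' ht' using ih
      exact ⟨.op i t', congrArg _ (funext ht')⟩
  have evalB : ∀ (σ : ℕ → Asub) (t : Term I ar ℕ),
      t.eval opB (fun n => ⟦σ n⟧) = ⟦⟨t.eval ops (fun n => (σ n).1), memeval σ t⟩⟧ := by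
    intro σ t
    induction t with
    | var n => rfl
    | op i ts ih =>
      show opB i (fun j => (ts j).eval opB fun n => ⟦σ n⟧) = _
      rw [funext ih]
      refine Eq.trans (hmkop i fun j => ⟨(ts j).eval ops (fun n => (σ n).1), memeval σ (ts j)⟩) ?_
      exact congrArg _ (Subtype.ext rfl)
  have hBsat : ∀ lr ∈ E, ∀ ρ : ℕ → B, Term.eval opB ρ lr.1 = Term.eval opB ρ lr.2 := by
    intro lr hlr ρ
    have hρ : ρ = fun n => ⟦(ρ n).out⟧ := funext fun n => (Quotient.out_eq (ρ n)).symm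
    rw [hρ, evalB, evalB]
    exact congrArg _ (Subtype.ext (hA lr hlr _))
  set k : Term I ar Y → B := fun u => ⟦⟨e (u.rename s), u.rename s, rfl⟩⟧ with hk
  have hkhom : ∀ (i : I) (ts : Fin (ar i) → Term I ar Y),
      k (Term.op i ts) = opB i fun j => k (ts j) := by
    intro i ts
    refine Eq.trans ?_ (hmkop i fun j => ⟨e ((ts j).rename s), (ts j).rename s, rfl⟩).symm
    exact congrArg _ (Subtype.ext rfl)
  refine ⟨B, hBfin, opB, hBsat, k,
    {b : B | ∃ t : Term I ar X, e t ∈ S ∧ b = ⟦⟨e t, t, rfl⟩⟧}, hkhom, ?_⟩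
  ext u
  have hus : (u.rename s).rename g = u := by
    rw [MalcevAux.rename_rename]
    have h2 : (fun y => g (s y)) = fun y : Y => y := funext hs
    rw [h2]
    exact MalcevAux.subst_var u
  simp only [Set.mem_setOf_eq, Set.mem_preimage]
  constructor
  · rintro ⟨t, htL, hEq⟩
    have htS : e t ∈ S := by
      rw [hLS] at htL
      show Term.eval ops α t ∈ S
      rw [← he]
      exact htL
    refine ⟨t, htS, Quotient.sound ⟨u.rename s, t, ?_, rfl, rfl⟩⟩
    rw [hus]
    exact hEq
  · rintro ⟨t, htS, hb⟩
    obtain ⟨t1, t2, hEq, h1, h2⟩ := Quotient.exact hb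
    refine ⟨p.subst ![t2, t1, u.rename s], ?_, ?_⟩
    · rw [hLS]
      show h _ ∈ S
      rw [he]
      show e _ ∈ S
      have hfn : e (p.subst ![t2, t1, u.rename s])
          = Term.eval ops ![e t2, e t1, e (u.rename s)] p := evp _ _ _
      rw [hfn]
      have h1' : e (u.rename s) = e t1 := h1.symm
      rw [h1', malA2, h2]
      exact htS
    · rw [rnp, hus]
      refine Eqv.symm (Eqv.trans (MalcevAux.Eqv_subst_congr _
        ![t2.rename g, t2.rename g, u] ?_ p) (malT1 _ _))
      intro v; fin_cases v
      exacts [.refl _, hEq, .refl _]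
end

section
/- There are infinitely many square-free words over a three-letter alphabet; moreover, two distinct square-free words are not equivalent under the congruence generated by xx = xxx, since the rewriting rule cannot apply to a square-free word. -/
/-- The congruence on words generated by the equation `www = ww` (rewriting in any
context), i.e. the smallest equivalence relation with `u(www)v ∼ u(ww)v`. -/
inductive Sim {α : Type} : List α → List α → Prop where
  | base (u v w : List α) : Sim (u ++ (w ++ w ++ w) ++ v) (u ++ (w ++ w) ++ v)
  | refl (t : List α) : Sim t t
  | symm {s t : List α} : Sim s t → Sim t s
  | trans {s t u : List α} : Sim s t → Sim t u → Sim s u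

/-- A word is square-free if it contains no nonempty factor of the form `xx`. -/
def SqFree {α : Type} (w : List α) : Prop :=
  ¬ ∃ u x v : List α, x ≠ [] ∧ w = u ++ (x ++ x) ++ v

/-! ### Auxiliary development: the Thue–Morse sequence and a ternary square-free word -/

/-- The Thue–Morse sequence: parity of the number of ones in binary expansion. -/
def tm (n : ℕ) : Bool := ((Nat.digits 2 n).count 1) % 2 == 1

lemma tm_even (n : ℕ) : tm (2*n) = tm n := by
  rcases Nat.eq_zero_or_pos n with rfl | hn
  · rfl
  · unfold tm
    rw [Nat.digits_def' (by norm_num : (1:ℕ) < 2) (by omega)]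
    have h1 : 2*n % 2 = 0 := by omega
    have h2 : 2*n / 2 = n := by omega
    rw [h1, h2]
    simp

lemma tm_odd (n : ℕ) : tm (2*n+1) = ! tm n := by
  unfold tm
  rw [Nat.digits_def' (by norm_num : (1:ℕ) < 2) (by omega)]
  have h1 : (2*n+1) % 2 = 1 := by omega
  have h2 : (2*n+1) / 2 = n := by omega
  rw [h1, h2]
  rcases Nat.mod_two_eq_zero_or_one ((Nat.digits 2 n).count 1) with h | h <;>
    simp [List.count_cons, Nat.add_mod, h]

/-- Thue–Morse has no factor `aaa`. -/
lemma no_aaa (n : ℕ) : ¬ (tm n = tm (n+1) ∧ tm (n+1) = tm (n+2)) := by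
  rintro ⟨h1, h2⟩
  rcases Nat.even_or_odd n with ⟨m, hm⟩ | ⟨m, hm⟩
  · rw [show n = 2*m by omega] at h1
    rw [tm_even, tm_odd] at h1
    cases tm m <;> simp_all
  · rw [show n+1 = 2*(m+1) by omega, show n+2 = 2*(m+1)+1 by omega,
        tm_even, tm_odd] at h2
    cases tm (m+1) <;> simp_all

/-- Thue–Morse is overlap-free: no factor of length `2p+1` with period `p ≥ 1`. -/
theorem no_overlap : ∀ p, 1 ≤ p → ∀ i, ¬ (∀ j, j ≤ p → tm (i+j) = tm (i+j+p)) := by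
  intro p
  induction p using Nat.strong_induction_on with
  | _ p ih =>
  intro hp i h
  rcases Nat.even_or_odd p with ⟨q, hq⟩ | ⟨q, hq⟩
  · -- p = 2q : reduce to period q
    have hq1 : 1 ≤ q := by omega
    apply ih q (by omega) hq1 (i/2)
    intro j hj
    rcases Nat.even_or_odd i with ⟨m, hm⟩ | ⟨m, hm⟩
    · have hh := h (2*j) (by omega)
      rw [show i + 2*j = 2*(m+j) by omega, show 2*(m+j) + p = 2*(m+j+q) by omega,
          tm_even, tm_even] at hh
      rw [show i/2 = m by omega]
      rw [show m + j + q = m+j+q by omega]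
      exact hh
    · have hh := h (2*j) (by omega)
      rw [show i + 2*j = 2*(m+j)+1 by omega, show 2*(m+j)+1 + p = 2*(m+j+q)+1 by omega,
          tm_odd, tm_odd] at hh
      rw [show i/2 = m by omega]
      exact Bool.not_inj hh
  · -- p = 2q+1
    rcases Nat.eq_zero_or_pos q with rfl | hq1
    · have h0 := h 0 (by omega)
      have h1 := h 1 (by omega)
      simp only [Nat.add_zero] at h0
      rw [show p = 1 by omega] at h0 h1
      exact no_aaa i ⟨h0, by rw [show i+1+1 = i+2 by omega] at h1; exact h1⟩
    · have h0 := h 0 (by omega)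
      have h1 := h 1 (by omega)
      have h2 := h 2 (by omega)
      have h3 := h 3 (by omega)
      simp only [Nat.add_zero] at h0
      rcases Nat.even_or_odd i with ⟨m, hm⟩ | ⟨m, hm⟩
      · rw [show i = 2*m by omega, show 2*m+p = 2*(m+q)+1 by omega, tm_even, tm_odd] at h0
        rw [show i+1 = 2*m+1 by omega, show 2*m+1+p = 2*(m+q+1) by omega, tm_odd, tm_even] at h1
        rw [show i+2 = 2*(m+1) by omega, show 2*(m+1)+p = 2*(m+q+1)+1 by omega, tm_even, tm_odd] at h2
        rw [show i+3 = 2*(m+1)+1 by omega, show 2*(m+1)+1+p = 2*(m+q+2) by omega, tm_odd, tm_even] at h3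
        apply no_aaa (m+q)
        revert h0 h1 h2 h3
        cases tm m <;> cases tm (m+1) <;> cases tm (m+q) <;> cases tm (m+q+1) <;>
          cases tm (m+q+2) <;> simp
      · rw [show i = 2*m+1 by omega, show 2*m+1+p = 2*(m+q+1) by omega, tm_odd, tm_even] at h0
        rw [show i+1 = 2*(m+1) by omega, show 2*(m+1)+p = 2*(m+q+1)+1 by omega, tm_even, tm_odd] at h1
        rw [show i+2 = 2*(m+1)+1 by omega, show 2*(m+1)+1+p = 2*(m+q+2) by omega, tm_odd, tm_even] at h2
        rw [show i+3 = 2*(m+2) by omega, show 2*(m+2)+p = 2*(m+q+2)+1 by omega, tm_even, tm_odd] at h3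
        apply no_aaa m
        revert h0 h1 h2 h3
        cases tm m <;> cases tm (m+1) <;> cases tm (m+2) <;> cases tm (m+q+1) <;>
          cases tm (m+q+2) <;> simp

/-- The ternary sequence of "transition types" of Thue–Morse. -/
def dd (n : ℕ) : Fin 3 := if tm n = tm (n+1) then 0 else if tm n then 1 else 2

lemma dd_zero {a : ℕ} (h : dd a = 0) : tm a = tm (a+1) := by
  unfold dd at h
  split_ifs at h with h1 h2
  · exact h1
  · exact absurd h (by decide)
  · exact absurd h (by decide)

lemma dd_iff {a b : ℕ} (hd : dd a = dd b) : (tm a = tm b) ↔ (tm (a+1) = tm (b+1)) := by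
  unfold dd at hd
  cases h1 : tm a <;> cases h2 : tm (a+1) <;> cases h3 : tm b <;> cases h4 : tm (b+1) <;>
    simp [h1, h2, h3, h4] at hd ⊢

lemma dd_ne_zero {a b : ℕ} (hd : dd a = dd b) (h0 : dd a ≠ 0) : tm a = tm b := by
  unfold dd at hd h0
  cases h1 : tm a <;> cases h2 : tm (a+1) <;> cases h3 : tm b <;> cases h4 : tm (b+1) <;>
    simp [h1, h2, h3, h4] at hd h0 ⊢

/-- The sequence `dd` is square-free. -/
theorem dsq (m i : ℕ) (hm : 1 ≤ m) (h : ∀ j, j < m → dd (i+j) = dd (i+j+m)) : False := by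
  by_cases hr : tm i = tm (i+m)
  · -- all shifts agree: overlap in Thue–Morse
    apply no_overlap m hm i
    intro j hj
    induction j with
    | zero => simpa using hr
    | succ k ihk =>
      have hk : k < m := by omega
      have := (dd_iff (h k hk)).mp (by simpa using ihk (by omega))
      rw [show i+(k+1) = i+k+1 by omega, show i+k+1+m = i+k+m+1 by omega]
      exact this
  · -- all shifts disagree; then all dd = 0, constant word
    have hall : ∀ j, j ≤ m → ¬ (tm (i+j) = tm (i+j+m)) := by
      intro j hj
      induction j with
      | zero => simpa using hr
      | succ k ihk =>
        have hk : k < m := by omega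
        intro hc
        apply ihk (by omega)
        apply (dd_iff (h k hk)).mpr
        rw [show i+(k+1) = i+k+1 by omega, show i+k+1+m = i+k+m+1 by omega] at hc
        exact hc
    have hz : ∀ j, j < m → tm (i+j) = tm (i+j+1) := by
      intro j hj
      apply dd_zero
      by_contra hne
      exact hall j (by omega) (dd_ne_zero (h j hj) hne)
    rcases Nat.lt_or_ge m 2 with h2 | h2
    · have : m = 1 := by omega
      subst this
      exact hr (by simpa using hz 0 (by omega))
    · apply no_aaa i
      have e0 := hz 0 (by omega)
      have e1 := hz 1 (by omega)
      constructor
      · simpa using e0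
      · rw [show i+1+1 = i+2 by omega] at e1; exact e1

/-- The square-free word of length `n`. -/
def W (n : ℕ) : List (Fin 3) := (List.range n).map dd

lemma W_length (n : ℕ) : (W n).length = n := by simp [W]

lemma W_get? (n k : ℕ) (hk : k < n) : (W n)[k]? = some (dd k) := by
  simp [W, List.getElem?_map, List.getElem?_range, hk]

lemma W_sqfree (n : ℕ) : SqFree (W n) := by
  rintro ⟨u, x, v, hx, he⟩
  have hm : 1 ≤ x.length := List.length_pos_iff.mpr hx
  have hlen : n = u.length + (x.length + x.length) + v.length := by
    have := congrArg List.length he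
    simp [W] at this
    omega
  apply dsq x.length u.length hm
  intro j hj
  have h1 : u.length + j < n := by omega
  have h2 : u.length + j + x.length < n := by omega
  have he' : W n = u ++ (x ++ (x ++ v)) := by rw [he]; simp [List.append_assoc]
  have e1 : (W n)[u.length + j]? = x[j]? := by
    rw [he']
    rw [List.getElem?_append_right (by omega : u.length ≤ u.length + j)]
    rw [show u.length + j - u.length = j by omega]
    rw [List.getElem?_append, if_pos hj]
  have e2 : (W n)[u.length + j + x.length]? = x[j]? := by
    rw [he']
    rw [List.getElem?_append_right (by omega : u.length ≤ u.length + j + x.length)]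
    rw [show u.length + j + x.length - u.length = x.length + j by omega]
    rw [List.getElem?_append_right (by omega : x.length ≤ x.length + j)]
    rw [show x.length + j - x.length = j by omega]
    rw [List.getElem?_append, if_pos hj]
  rw [W_get? n _ h1] at e1
  rw [W_get? n _ h2] at e2
  exact Option.some_injective _ (e1.trans e2.symm)

/-- Rigidity: a `Sim`-step from a square-free word is trivial. -/
lemma sim_rigid {α : Type} {s t : List α} (hst : Sim s t) :
    (SqFree s → s = t) ∧ (SqFree t → t = s) := by
  induction hst with
  | base u v w =>
    constructor
    · intro hsf
      have hw : w = [] := by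
        by_contra hne
        exact hsf ⟨u, w, w ++ v, hne, by simp [List.append_assoc]⟩
      subst hw; simp
    · intro hsf
      have hw : w = [] := by
        by_contra hne
        exact hsf ⟨u, w, v, hne, by simp [List.append_assoc]⟩
      subst hw; simp
  | refl t => exact ⟨fun _ => rfl, fun _ => rfl⟩
  | symm h ih => exact ⟨ih.2, ih.1⟩
  | trans h1 h2 ih1 ih2 =>
    constructor
    · intro hs
      have e1 := ih1.1 hs
      rw [e1] at hs
      exact e1.trans (ih2.1 hs)
    · intro hu
      have e2 := ih2.2 hu
      rw [e2] at hu
      exact e2.trans (ih1.2 hu)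

/-- there are infinitely many square-free words over a three-letter
alphabet, and two distinct square-free words are never equivalent under the
congruence generated by `xxx = xx`. -/
theorem squarefree_infinite_and_rigid :
    {w : List (Fin 3) | SqFree w}.Infinite ∧
    ∀ v w : List (Fin 3), SqFree v → SqFree w → Sim v w → v = w := by
  constructor
  · apply Set.infinite_of_injective_forall_mem (f := W)
    · intro a b hab
      have := congrArg List.length hab
      simpa [W_length] using this
    · intro n
      exact W_sqfree n
  · intro v w hv _ hsim
    exact (sim_rigid hsim).1 hv
end

section
/- The free group monad does not preserve weak pullbacks: for the pullback square with apex the empty set, given by the unique maps ∅ → ∅, ∅ → {c}, {a,b} → {c}, the elements 1 ∈ F(∅) and a·b⁻¹ ∈ F({a,b}) have the same image in F({c}), but there is no element of F(∅) mapping to a·b⁻¹ ∈ F({a,b}). -/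
/-- the free group functor does not preserve weak pullbacks.
With the pullback square over the unique maps `∅ → {c}` and `{a,b} → {c}` (apex `∅`),
the elements `1 ∈ F(∅)` and `a·b⁻¹ ∈ F({a,b})` have the same image in `F({c})`,
but no element of `F(∅)` maps to `a·b⁻¹`. -/
theorem freeGroup_not_weak_pullback :
    (FreeGroup.map (fun _ : Bool => ()))
        (FreeGroup.of true * (FreeGroup.of false)⁻¹)
      = (FreeGroup.map (fun x : Empty => (x.elim : Unit))) (1 : FreeGroup Empty) ∧
    ¬ ∃ p : FreeGroup Empty,
        (FreeGroup.map (fun x : Empty => (x.elim : Bool))) p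
          = FreeGroup.of true * (FreeGroup.of false)⁻¹ := by
  constructor
  · simp [FreeGroup.map.of]
  · rintro ⟨p, hp⟩
    have hp1 : p = 1 := Subsingleton.elim p 1
    rw [hp1, map_one] at hp
    have : FreeGroup.of true = FreeGroup.of false := by
      rw [← mul_inv_eq_one, ← hp]
    exact absurd (FreeGroup.of_injective this) (by simp)
end

section
/- The multiplication of the free monoid monad is weakly cartesian: for any function f : X → Y, any s ∈ X* and any θ ∈ (Y*)* with flatten(θ) = f*(s), there exists ψ ∈ (X*)* such that flatten(ψ) = s and (f*)*(ψ) = θ. -/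
/-- the multiplication (flattening) of the free monoid monad is weakly
cartesian: if `flatten θ = f*(s)` then `s` admits a matching decomposition `ψ`. -/
theorem freeMonoid_mu_weakly_cartesian {X Y : Type} (f : X → Y)
    (s : List X) (θ : List (List Y)) (h : θ.flatten = s.map f) :
    ∃ ψ : List (List X), ψ.flatten = s ∧ ψ.map (List.map f) = θ := by
  induction θ generalizing s with
  | nil =>
    have : s = [] := by
      cases s with
      | nil => rfl
      | cons a l => simp at h
    exact ⟨[], by simp [this]⟩
  | cons t θ ih =>
    have h' : t ++ θ.flatten = (s.take t.length).map f ++ (s.drop t.length).map f := by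
      rw [← List.map_append, List.take_append_drop]; simpa using h
    have hlen : t.length ≤ s.length := by
      have := congrArg List.length h'
      simp at this; omega
    have hlen2 : ((s.take t.length).map f).length = t.length := by
      simp [hlen]
    obtain ⟨h1, h2⟩ := List.append_inj h'.symm hlen2
    obtain ⟨ψ, hψ1, hψ2⟩ := ih (s.drop t.length) h2.symm
    exact ⟨s.take t.length :: ψ, by simp [hψ1], by simp [hψ2, h1]⟩
end

section
/- In the reader monad T X = X^ω (with unit the constant sequence and multiplication the diagonal), every language L ⊆ Σ^ω that is the preimage of a single point under a T-algebra homomorphism into a T-algebra is a 'rectangle': L = Z₁ × Z₂ × Z₃ × ⋯ for some sequence of subsets Zₙ ⊆ Σ, where Zₙ = { x : ∃ v ∈ L, vₙ = x }. -/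
/-- in the reader monad `T X = X^ω` (unit = constant sequence,
multiplication = diagonal), every language recognized by a point (i.e. a preimage of
a single point under a `T`-algebra homomorphism `h : T Σ → A`) is a rectangle
`Z₁ × Z₂ × ⋯` with `Zₙ = { x : ∃ v ∈ L, v n = x }`. -/
theorem reader_point_language_rectangular {σ A : Type}
    (α : (ℕ → A) → A)
    (hunit : ∀ a : A, α (fun _ => a) = a)
    (hmult : ∀ w : ℕ → ℕ → A, α (fun n => w n n) = α (fun n => α (w n)))
    (h : (ℕ → σ) → A)
    (hhom : ∀ t : ℕ → ℕ → σ, h (fun n => t n n) = α (fun n => h (t n)))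
    (a : A) :
    {w : ℕ → σ | h w = a}
      = {w : ℕ → σ | ∀ n : ℕ, w n ∈ {x : σ | ∃ v ∈ {v : ℕ → σ | h v = a}, v n = x}} := by
  ext w
  simp only [Set.mem_setOf_eq]
  constructor
  · intro hw n
    exact ⟨w, hw, rfl⟩
  · intro hw
    choose v hv1 hv2 using hw
    have : w = fun n => v n n := funext fun n => (hv2 n).symm
    rw [this, hhom v]
    have : (fun n => h (v n)) = fun _ => a := funext fun n => hv1 n
    rw [this, hunit]
end
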